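/- Let X be a real inner product space, let K be a convex cone in X, and let x̄ ∈ K. Define the cone of feasible directions of K at x̄ as Fd(K, x̄) = { h ∈ X : ∃ α > 0, x̄ + α h ∈ K }. Then the inner dual cone of Fd(K, x̄) equals { y ∈ X : y belongs to the inner dual cone of K and ⟪x̄, y⟫ = 0 }. -/

import Mathlib

/-!
The cone `Fd(K, x̄)` contains `K` and `-x̄`, and each of its elements is a positive multiple of
some `k - x̄` with `k ∈ K`. Hence `⟪·, y⟫` is nonnegative on `Fd(K, x̄)` exactly when it is
nonnegative on `K` and `⟪x̄, y⟫ ≤ 0`; as `x̄ ∈ K`, the latter means `⟪x̄, y⟫ = 0`.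
-/

open scoped RealInnerProductSpace

def feasibleDirections {X : Type*} [AddCommGroup X] [Module ℝ X] (K : Set X) (xbar : X) :
    Set X :=
  {h | ∃ α : ℝ, 0 < α ∧ xbar + α • h ∈ K}

section Module

variable {X : Type*} [AddCommGroup X] [Module ℝ X] {K : Set X} {xbar : X}

theorem subset_feasibleDirections (hadd : ∀ x ∈ K, ∀ y ∈ K, x + y ∈ K) (hxbar : xbar ∈ K) :
    K ⊆ feasibleDirections K xbar :=
  fun x hx => ⟨1, one_pos, by simpa using hadd xbar hxbar x hx⟩

theorem neg_mem_feasibleDirections (hsmul : ∀ c : ℝ, 0 < c → ∀ x ∈ K, c • x ∈ K)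
    (hxbar : xbar ∈ K) : -xbar ∈ feasibleDirections K xbar := by
  refine ⟨2⁻¹, by norm_num, ?_⟩
  have half : xbar + (2⁻¹ : ℝ) • -xbar = (2⁻¹ : ℝ) • xbar := by module
  exact half ▸ hsmul _ (by norm_num) _ hxbar

end Module

theorem inner_nonneg_of_mem_feasibleDirections {X : Type*} [NormedAddCommGroup X]
    [InnerProductSpace ℝ X] {K : Set X} {xbar y h : X} (hK : ∀ x ∈ K, 0 ≤ ⟪x, y⟫)
    (hperp : ⟪xbar, y⟫ = 0) (hh : h ∈ feasibleDirections K xbar) : 0 ≤ ⟪h, y⟫ := by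
  obtain ⟨α, hα, hmem⟩ := hh
  have hαh : 0 ≤ α * ⟪h, y⟫ := by
    simpa [inner_add_left, real_inner_smul_left, hperp] using hK _ hmem
  exact (mul_nonneg_iff_of_pos_left hα).mp hαh

/-- **Dual cone of the cone of feasible directions.** Let `K` be a convex cone in a real
inner product space `X` and `xbar ∈ K`. The inner dual cone of the cone of feasible
directions `Fd(K, xbar) = {h | ∃ α > 0, xbar + α • h ∈ K}` equals the set of `y` in the inner
dual cone of `K` with `⟪xbar, y⟫ = 0`. -/
theorem dualCone_feasibleDirections {X : Type*} [NormedAddCommGroup X]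
    [InnerProductSpace ℝ X]
    (K : Set X)
    (hadd : ∀ x ∈ K, ∀ y ∈ K, x + y ∈ K)
    (hsmul : ∀ c : ℝ, 0 < c → ∀ x ∈ K, c • x ∈ K)
    (xbar : X) (hxbar : xbar ∈ K) :
    {y : X | ∀ h ∈ {h : X | ∃ α : ℝ, 0 < α ∧ xbar + α • h ∈ K}, 0 ≤ (inner ℝ h y : ℝ)} =
      {y : X | (∀ x ∈ K, 0 ≤ (inner ℝ x y : ℝ)) ∧ (inner ℝ xbar y : ℝ) = 0} := by
  ext y
  constructor
  · intro hy
    have hK : ∀ x ∈ K, 0 ≤ ⟪x, y⟫ := fun x hx => hy x (subset_feasibleDirections hadd hxbar hx)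
    have hneg : 0 ≤ ⟪-xbar, y⟫ := hy _ (neg_mem_feasibleDirections hsmul hxbar)
    rw [inner_neg_left] at hneg
    exact ⟨hK, le_antisymm (by linarith) (hK xbar hxbar)⟩
  · rintro ⟨hK, hperp⟩ h hh
    exact inner_nonneg_of_mem_feasibleDirections hK hperp hh
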